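/- arXiv:2507.23482 — 3 statements merged into one kernel-verified Lean document; each statement's English description precedes it below -/
import Mathlib

section
/- Let m = 2^p − 1 with p ≥ 1. Then in Q_m, (x_1 + x_2 + ⋯ + x_m)^m = ∏_{i=0}^{p−1} ( x_{2^i}^{2^i} + x_{2^i+1}^{2^i} + ⋯ + x_m^{2^i} ), i.e. in the i-th factor the sum extends over x_j^{2^i} for 2^i ≤ j ≤ m. -/
open MvPolynomial Finset
open Fin.NatCast

noncomputable section

/-- The defining ideal of `Q_m`: generated by `x_1^2` and `x_i^2 - x_{i-1} x_i` for `2 ≤ i ≤ m`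
(variables are 1-based; `X ((i-1 : ℕ) : Fin m)` is `x_i`). -/
def Qrel (m : ℕ) [NeZero m] : Ideal (MvPolynomial (Fin m) (ZMod 2)) :=
  Ideal.span ((fun i : ℕ =>
      X ((i - 1 : ℕ) : Fin m) ^ 2 -
        (if i = 1 then 0 else X ((i - 2 : ℕ) : Fin m) * X ((i - 1 : ℕ) : Fin m))) ''
    Set.Icc 1 m)

/-- The ring `Q_m`. -/
abbrev Qring (m : ℕ) [NeZero m] : Type :=
  MvPolynomial (Fin m) (ZMod 2) ⧸ Qrel m

/-- The image of `x_i` (1-based, for `1 ≤ i ≤ m`) in `Q_m`. -/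
def xQ (m : ℕ) [NeZero m] (i : ℕ) : Qring m :=
  Ideal.Quotient.mk (Qrel m) (X ((i - 1 : ℕ) : Fin m))

/-!
Since `x_1^2 = 0` and `x_{j+1}^{n+1} = x_j^n x_{j+1}`, induction on `j` gives `x_j^{j+1} = 0`.
Writing `m = 2^p - 1 = ∑_{i<p} 2^i`, the power `(∑ x_j)^m` is the product of the Frobenius
powers `(∑ x_j)^{2^i} = ∑ x_j^{2^i}`, and in the `i`-th factor the terms with `j < 2^i` vanish.
-/

section Relations

variable {m : ℕ} [NeZero m]

theorem xQ_sq {i : ℕ} (hi : 1 ≤ i) (him : i ≤ m) :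
    xQ m i ^ 2 = if i = 1 then 0 else xQ m (i - 1) * xQ m i := by
  have hrel : (X ((i - 1 : ℕ) : Fin m) ^ 2 -
      (if i = 1 then 0 else X ((i - 2 : ℕ) : Fin m) * X ((i - 1 : ℕ) : Fin m))) ∈ Qrel m :=
    Ideal.subset_span ⟨i, Set.mem_Icc.2 ⟨hi, him⟩, rfl⟩
  rw [← Ideal.Quotient.eq_zero_iff_mem, map_sub, sub_eq_zero] at hrel
  rw [xQ, ← map_pow, hrel]
  split_ifs
  · exact map_zero _
  · rw [map_mul, show i - 2 = i - 1 - 1 by omega]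
    rfl

theorem xQ_one_sq : xQ m 1 ^ 2 = 0 := by
  simpa using xQ_sq (m := m) le_rfl NeZero.one_le

theorem xQ_succ_pow_succ {i : ℕ} (hi : 1 ≤ i) (him : i + 1 ≤ m) (n : ℕ) :
    xQ m (i + 1) ^ (n + 1) = xQ m i ^ n * xQ m (i + 1) := by
  induction n with
  | zero => simp
  | succ n ih =>
    have hsq := xQ_sq (m := m) (i := i + 1) (by omega) him
    rw [if_neg (by omega), Nat.add_sub_cancel] at hsq
    rw [pow_succ, ih, mul_assoc, ← sq, hsq]
    ring

theorem xQ_pow_succ_self {j : ℕ} (hj : 1 ≤ j) (hjm : j ≤ m) : xQ m j ^ (j + 1) = 0 := by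
  induction j, hj using Nat.le_induction with
  | base => exact xQ_one_sq
  | succ j hj ih =>
    rw [xQ_succ_pow_succ hj hjm, ih (by omega), zero_mul]

theorem xQ_pow_eq_zero {j n : ℕ} (hj : 1 ≤ j) (hjm : j ≤ m) (hn : j < n) : xQ m j ^ n = 0 :=
  pow_eq_zero_of_le hn (xQ_pow_succ_self hj hjm)

theorem sum_xQ_pow_two_pow (s : Finset ℕ) (n : ℕ) :
    (∑ j ∈ s, xQ m j) ^ 2 ^ n = ∑ j ∈ s, xQ m j ^ 2 ^ n := by
  -- Frobenius is applied upstairs, where `CharP _ 2` is available without knowing `Q_m ≠ 0`.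
  simp only [xQ, ← map_sum, ← map_pow, sum_pow_char_pow]

end Relations

theorem statement8_general (p : ℕ) (m : ℕ) [NeZero m] (hm : m = 2 ^ p - 1) :
    (∑ i ∈ Finset.Icc 1 m, xQ m i) ^ m =
      ∏ i ∈ Finset.range p, (∑ j ∈ Finset.Icc (2 ^ i) m, xQ m j ^ (2 ^ i)) := by
  have hm_geom : ∑ i ∈ range p, 2 ^ i = m := by
    simpa [← hm] using Nat.geomSum_eq le_rfl p
  have hpow_prod :
      (∑ i ∈ Icc 1 m, xQ m i) ^ m = ∏ i ∈ range p, (∑ j ∈ Icc 1 m, xQ m j) ^ 2 ^ i := by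
    rw [prod_pow_eq_pow_sum, hm_geom]
  rw [hpow_prod]
  refine prod_congr rfl fun i _ => ?_
  rw [sum_xQ_pow_two_pow]
  refine (sum_subset (Icc_subset_Icc_left Nat.one_le_two_pow) fun j hj hj' => ?_).symm
  simp only [mem_Icc, not_and, not_le] at hj hj'
  exact xQ_pow_eq_zero hj.1 hj.2 (by omega)

/-- Equation (2.6): for `m = 2^p - 1` with `p ≥ 1`, in `Q_m`:
`(x_1 + ⋯ + x_m)^m = ∏_{i=0}^{p-1} (x_{2^i}^{2^i} + ⋯ + x_m^{2^i})`. -/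
theorem statement8 (p : ℕ) (hp : 1 ≤ p) (m : ℕ) [NeZero m] (hm : m = 2 ^ p - 1) :
    (∑ i ∈ Finset.Icc 1 m, xQ m i) ^ m =
      ∏ i ∈ Finset.range p, (∑ j ∈ Finset.Icc (2 ^ i) m, xQ m j ^ (2 ^ i)) :=
  statement8_general p m hm
end
end

section
/- Let m ≥ 1 and 0 ≤ D ≤ m − 1, and let e_{D+1},…,e_m be nonnegative integers with e_{D+1} + ⋯ + e_m = m − D such that for every j with D + 1 ≤ j ≤ m one has e_{D+1} + ⋯ + e_j ≤ j − D. Then the monomial x_{D+1}^{e_{D+1}} ⋯ x_m^{e_m} equals x_{D+1} x_{D+2} ⋯ x_m in Q_m. -/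
/-!
Scan the monomial from its top variable `x_b` downwards. The partial-sum bound at `b - 1`
forces `e_b ≥ 1`, and the relation `x_b^2 = x_{b-1} x_b` gives `x_b^{c+1} = x_{b-1}^c x_b`,
so the surplus `c = e_b - 1` can be moved onto `x_{b-1}`. The new exponents on
`x_{D+1}, …, x_{b-1}` again satisfy the hypotheses (their total is now exactly `b - 1 - D`),
and induction on `b` finishes.
-/

open MvPolynomial Finset
open Fin.NatCast

noncomputable section

theorem pow_succ_eq_pow_mul_of_sq_eq_mul {M : Type*} [CommMonoid M] {y z : M}
    (h : y ^ 2 = z * y) (k : ℕ) : y ^ (k + 1) = z ^ k * y := by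
  induction k with
  | zero => simp
  | succ k ih =>
    rw [pow_succ, ih, mul_assoc, ← sq, h, ← mul_assoc, ← pow_succ]

theorem prod_pow_eq_prod_of_partial_sum_le {M : Type*} [CommMonoid M] (x : ℕ → M) {D b : ℕ}
    (hb : D + 1 ≤ b) (hx : ∀ j, D + 1 < j → j ≤ b → x j ^ 2 = x (j - 1) * x j) (e : ℕ → ℕ)
    (hsum : ∑ i ∈ Icc (D + 1) b, e i = b - D)
    (hpartial : ∀ j, D + 1 ≤ j → j ≤ b → ∑ i ∈ Icc (D + 1) j, e i ≤ j - D) :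
    ∏ i ∈ Icc (D + 1) b, x i ^ e i = ∏ i ∈ Icc (D + 1) b, x i := by
  induction b, hb using Nat.le_induction generalizing e with
  | base => simp_all
  | succ b hDb ih =>
    have hsplit : ∑ i ∈ Icc (D + 1) (b + 1), e i = ∑ i ∈ Icc (D + 1) b, e i + e (b + 1) :=
      sum_Icc_succ_top (by omega) e
    obtain ⟨c, hc⟩ : ∃ c, e (b + 1) = c + 1 := by
      have hpartial_b := hpartial b hDb (by omega)
      exact Nat.exists_eq_add_one.mpr (by omega)
    set e' : ℕ → ℕ := e + Pi.single b c
    have hsum' (j : ℕ) :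
        ∑ i ∈ Icc (D + 1) j, e' i = ∑ i ∈ Icc (D + 1) j, e i + if b ≤ j then c else 0 := by
      have hb_mem : b ∈ Icc (D + 1) j ↔ b ≤ j := by simp [mem_Icc, hDb]
      simp only [e', Pi.add_apply, sum_add_distrib, sum_pi_single', hb_mem]
    have hprod :
        ∏ i ∈ Icc (D + 1) b, x i ^ e' i = (∏ i ∈ Icc (D + 1) b, x i ^ e i) * x b ^ c := by
      simp only [e', Pi.add_apply, pow_add, prod_mul_distrib, Pi.single_apply, pow_ite, pow_zero,
        prod_ite_eq', mem_Icc, le_refl, hDb, and_self, if_true]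
    have hrec : ∏ i ∈ Icc (D + 1) b, x i ^ e' i = ∏ i ∈ Icc (D + 1) b, x i := by
      refine ih (fun j hj hjb => hx j hj (by omega)) e' ?_ fun j hj hjb => ?_
      · rw [hsum', if_pos le_rfl]
        omega
      · rw [hsum']
        split_ifs with hbj
        · obtain rfl : j = b := by omega
          omega
        · simpa using hpartial j hj (by omega)
    rw [prod_Icc_succ_top (by omega), prod_Icc_succ_top (by omega), hc,
      pow_succ_eq_pow_mul_of_sq_eq_mul (hx (b + 1) (by omega) le_rfl) c, Nat.add_sub_cancel,
      ← mul_assoc, ← hprod, hrec]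

theorem xQ_sq_s9 {m : ℕ} [NeZero m] {j : ℕ} (hj : 2 ≤ j) (hjm : j ≤ m) :
    xQ m j ^ 2 = xQ m (j - 1) * xQ m j := by
  unfold xQ
  rw [← map_pow, ← map_mul, Ideal.Quotient.eq]
  apply Ideal.subset_span
  refine ⟨j, ⟨by omega, hjm⟩, ?_⟩
  simp only [if_neg (by omega : j ≠ 1), show j - 1 - 1 = j - 2 by omega]

theorem statement9_general (m : ℕ) [NeZero m] (D : ℕ) (hD : D ≤ m - 1)
    (e : ℕ → ℕ) (hsum : ∑ i ∈ Finset.Icc (D + 1) m, e i = m - D)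
    (hpartial : ∀ j, D + 1 ≤ j → j ≤ m → ∑ i ∈ Finset.Icc (D + 1) j, e i ≤ j - D) :
    ∏ i ∈ Finset.Icc (D + 1) m, xQ m i ^ e i = ∏ i ∈ Finset.Icc (D + 1) m, xQ m i := by
  have hm : 1 ≤ m := NeZero.one_le
  exact prod_pow_eq_prod_of_partial_sum_le (xQ m) (by omega)
    (fun _ hj hjm => xQ_sq_s9 (by omega) hjm) e hsum hpartial

/-- If `e_{D+1} + ⋯ + e_m = m - D` with all partial sums `e_{D+1} + ⋯ + e_j ≤ j - D`,
then `x_{D+1}^{e_{D+1}} ⋯ x_m^{e_m} = x_{D+1} x_{D+2} ⋯ x_m` in `Q_m`. -/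
theorem statement9 (m : ℕ) [NeZero m] (hm : 1 ≤ m) (D : ℕ) (hD : D ≤ m - 1)
    (e : ℕ → ℕ) (hsum : ∑ i ∈ Finset.Icc (D + 1) m, e i = m - D)
    (hpartial : ∀ j, D + 1 ≤ j → j ≤ m → ∑ i ∈ Finset.Icc (D + 1) j, e i ≤ j - D) :
    ∏ i ∈ Finset.Icc (D + 1) m, xQ m i ^ e i = ∏ i ∈ Finset.Icc (D + 1) m, xQ m i :=
  statement9_general m D hD e hsum hpartial
end
end

section
/- Let s ≥ 1, t ≥ 0, and m ≥ t + s. If a polynomial g ∈ (ℤ/2)[y_1,…,y_s] maps to 0 in Q_s under the quotient map sending y_i to x_i, then the element x_1 x_2 ⋯ x_t · g(x_{t+1}, x_{t+2}, …, x_{t+s}) equals 0 in Q_m. -/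
open MvPolynomial Finset
open Fin.NatCast

noncomputable section

/-!
The substitution `y_i ↦ x_{t+i}` carries the relations of `Q_s` to relations of `Q_m`, except
for `y_1^2 ↦ x_{t+1}^2`, which is not zero in `Q_m`. It is, however, killed by `x_1 ⋯ x_t`:
by induction on `t`, `x_1 ⋯ x_t x_{t+1}^2 = x_1 ⋯ x_{t-1} x_t^2 x_{t+1} = 0`. Hence the kernel
of `g ↦ x_1 ⋯ x_t g(x_{t+1}, …, x_{t+s})`, an ideal, contains every generator of the
defining ideal of `Q_s`.
-/

section Qring

variable {m : ℕ} [NeZero m]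

theorem Qrel_generator_mem {i : ℕ} (hi : 1 ≤ i) (him : i ≤ m) :
    X ((i - 1 : ℕ) : Fin m) ^ 2 -
        (if i = 1 then 0 else X ((i - 2 : ℕ) : Fin m) * X ((i - 1 : ℕ) : Fin m)) ∈ Qrel m :=
  Ideal.subset_span ⟨i, ⟨hi, him⟩, rfl⟩

theorem xQ_succ_sq {i : ℕ} (hi : 1 ≤ i) (him : i + 1 ≤ m) :
    xQ m (i + 1) ^ 2 = xQ m i * xQ m (i + 1) := by
  have hgen := Qrel_generator_mem (i := i + 1) (by omega) him
  rw [if_neg (by omega), show i + 1 - 2 = i - 1 by omega, ← Ideal.Quotient.eq_zero_iff_mem,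
    map_sub, sub_eq_zero] at hgen
  simpa [xQ] using hgen

theorem prod_xQ_mul_sq_eq_zero {t : ℕ} (ht : t + 1 ≤ m) :
    (∏ i ∈ Icc 1 t, xQ m i) * xQ m (t + 1) ^ 2 = 0 := by
  induction t with
  | zero => simpa using xQ_one_sq
  | succ t ih =>
    calc (∏ i ∈ Icc 1 (t + 1), xQ m i) * xQ m (t + 1 + 1) ^ 2
        = (∏ i ∈ Icc 1 t, xQ m i) * xQ m (t + 1) * (xQ m (t + 1) * xQ m (t + 1 + 1)) := by
          rw [prod_Icc_succ_top (by omega), xQ_succ_sq (by omega) ht]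
      _ = (∏ i ∈ Icc 1 t, xQ m i) * xQ m (t + 1) ^ 2 * xQ m (t + 1 + 1) := by ring
      _ = 0 := by rw [ih (by omega), zero_mul]

end Qring

theorem aeval_xQ_shift_X (t m : ℕ) {s : ℕ} [NeZero s] [NeZero m] {k : ℕ} (hk : k < s) :
    aeval (R := ZMod 2) (fun i : Fin s => xQ m (t + (i : ℕ) + 1)) (X (k : Fin s)) =
      xQ m (t + k + 1) := by
  rw [aeval_X, Fin.val_cast_of_lt hk]

theorem Qrel_le_comap_annihilator (s t m : ℕ) [NeZero s] [NeZero m] (hm : t + s ≤ m) :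
    Qrel s ≤ (Submodule.span (Qring m) {∏ i ∈ Icc 1 t, xQ m i}).annihilator.comap
      (aeval fun i : Fin s => xQ m (t + (i : ℕ) + 1)) := by
  refine Ideal.span_le.2 ?_
  rintro _ ⟨i, ⟨hi, his⟩, rfl⟩
  dsimp only
  rw [SetLike.mem_coe, Ideal.mem_comap, Submodule.mem_annihilator_span_singleton, smul_eq_mul]
  obtain rfl | ⟨j, rfl⟩ : i = 1 ∨ ∃ j, i = j + 2 := by
    rcases i with _ | _ | j <;> simp_all
  · rw [if_pos rfl, sub_zero, map_pow, aeval_xQ_shift_X t m (by omega), mul_comm]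
    exact prod_xQ_mul_sq_eq_zero (by omega)
  · rw [if_neg (by omega), Nat.add_sub_cancel, show j + 2 - 1 = j + 1 by omega, map_sub,
      map_mul, map_pow, aeval_xQ_shift_X t m (by omega), aeval_xQ_shift_X t m (by omega),
      show t + (j + 1) + 1 = t + j + 1 + 1 by omega, xQ_succ_sq (by omega) (by omega),
      sub_self, zero_mul]

theorem statement17_general (s t m : ℕ) [NeZero s] [NeZero m] (hm : t + s ≤ m)
    (g : MvPolynomial (Fin s) (ZMod 2))
    (hg : Ideal.Quotient.mk (Qrel s) g = 0) :
    (∏ i ∈ Finset.Icc 1 t, xQ m i) *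
      MvPolynomial.aeval (fun i : Fin s => xQ m (t + (i : ℕ) + 1)) g = 0 := by
  have hker := Qrel_le_comap_annihilator s t m hm (Ideal.Quotient.eq_zero_iff_mem.1 hg)
  rw [Ideal.mem_comap, Submodule.mem_annihilator_span_singleton, smul_eq_mul] at hker
  rw [mul_comm, ← hker]

/-- If `g ∈ (ℤ/2)[y_1, …, y_s]` maps to `0` in `Q_s`, then for `m ≥ t + s`,
`x_1 ⋯ x_t ⋅ g(x_{t+1}, …, x_{t+s}) = 0` in `Q_m`.
(The variable `y_i` of `g`, `1 ≤ i ≤ s`, is `X (i-1 : Fin s)` and is sent to `x_{t+i}`.) -/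
theorem statement17 (s t m : ℕ) [NeZero s] [NeZero m] (hs : 1 ≤ s) (hm : t + s ≤ m)
    (g : MvPolynomial (Fin s) (ZMod 2))
    (hg : Ideal.Quotient.mk (Qrel s) g = 0) :
    (∏ i ∈ Finset.Icc 1 t, xQ m i) *
      MvPolynomial.aeval (fun i : Fin s => xQ m (t + (i : ℕ) + 1)) g = 0 :=
  statement17_general s t m hm g hg
end
end
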